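/- For every p > 0, m_p(1/3) = (5p+4)/(6(2p+1)) > 1/3; in particular x = 1/3 is not a fixed point of the mean residual life function m_p for any p > 0. -/

import Mathlib

open MeasureTheory Set Filter

/-- The CDF of the p-singular Cantor-type distribution: the monotone increasing
function on [0,1] with F(x/3) = F(x)/(p+1) for x ∈ [0,1] and
F(1-x) = 1 - p·F(x) for x ∈ [0,1/3]. -/
def IsCantorCDFp (p : ℝ) (F : ℝ → ℝ) : Prop :=
  Monotone F ∧
    (∀ x ∈ Set.Icc (0:ℝ) 1, F (x/3) = F x / (p+1)) ∧
    (∀ x ∈ Set.Icc (0:ℝ) (1/3), F (1-x) = 1 - p * F x)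

/-- The mean residual life function of a distribution with CDF F supported on [0,1]:
m(x) = (1/(1-F(x))) ∫_x^1 (1-F(u)) du  (equal to 0 at x = 1 by convention). -/
noncomputable def mrl (F : ℝ → ℝ) (x : ℝ) : ℝ :=
  (∫ u in x..(1:ℝ), (1 - F u)) / (1 - F x)

/-!
The two self-similarity relations pin down `F` on the middle third, where it is constant
`1/(p+1)`, and express the integrals of `F` over the outer thirds through `I = ∫₀¹ F`:
by scaling, the left third contributes `A = I / (3(p+1))`; by reflection, the right third
contributes `1/3 - p A`. Adding the three pieces gives a linear equation for `I`, whence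
`I = (p+2)/(2(2p+1))`, and `m_p(1/3)` follows by splitting off the left third.
-/

namespace IsCantorCDFp

variable {p : ℝ} {F : ℝ → ℝ}

protected theorem monotone (hF : IsCantorCDFp p F) : Monotone F := hF.1

theorem map_div_three (hF : IsCantorCDFp p F) {x : ℝ} (hx : x ∈ Icc 0 1) :
    F (x / 3) = F x / (p + 1) :=
  hF.2.1 x hx

theorem map_one_sub (hF : IsCantorCDFp p F) {x : ℝ} (hx : x ∈ Icc 0 (1/3)) :
    F (1 - x) = 1 - p * F x :=
  hF.2.2 x hx

theorem intervalIntegrable (hF : IsCantorCDFp p F) (a b : ℝ) :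
    IntervalIntegrable F volume a b :=
  hF.monotone.intervalIntegrable

theorem map_zero (hF : IsCantorCDFp p F) (hp : p ≠ 0) : F 0 = 0 := by
  have h := hF.map_div_three ⟨le_rfl, zero_le_one⟩
  rw [zero_div] at h
  by_cases hp1 : p + 1 = 0
  · simpa [hp1] using h
  · rw [eq_div_iff hp1] at h
    have hmul : p * F 0 = 0 := by linear_combination h
    exact (mul_eq_zero.1 hmul).resolve_left hp

theorem map_one (hF : IsCantorCDFp p F) (hp : p ≠ 0) : F 1 = 1 := by
  simpa [hF.map_zero hp] using hF.map_one_sub ⟨le_rfl, by norm_num⟩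

theorem map_third (hF : IsCantorCDFp p F) (hp : p ≠ 0) : F (1/3) = 1 / (p + 1) := by
  simpa [hF.map_one hp] using hF.map_div_three ⟨zero_le_one, le_rfl⟩

theorem map_two_thirds (hF : IsCantorCDFp p F) (hp : p ≠ 0) (hp1 : p + 1 ≠ 0) :
    F (2/3) = 1 / (p + 1) :=
  calc F (2/3) = F (1 - 1/3) := by norm_num
    _ = 1 - p * (1 / (p + 1)) := by rw [hF.map_one_sub ⟨by norm_num, le_rfl⟩, hF.map_third hp]
    _ = 1 / (p + 1) := by field_simp; ring

theorem eqOn_middle_third (hF : IsCantorCDFp p F) (hp : p ≠ 0) (hp1 : p + 1 ≠ 0) :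
    EqOn F (fun _ ↦ 1 / (p + 1)) (Icc (1/3) (2/3)) := fun _ hu ↦
  le_antisymm (hF.map_two_thirds hp hp1 ▸ hF.monotone hu.2) (hF.map_third hp ▸ hF.monotone hu.1)

theorem integral_middle_third (hF : IsCantorCDFp p F) (hp : p ≠ 0) (hp1 : p + 1 ≠ 0) :
    ∫ u in (1/3 : ℝ)..2/3, F u = 1 / (3 * (p + 1)) := by
  rw [intervalIntegral.integral_congr (g := fun _ ↦ 1 / (p + 1)) <| by
    rw [uIcc_of_le (by norm_num)]; exact hF.eqOn_middle_third hp hp1]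
  simp only [intervalIntegral.integral_const, smul_eq_mul]
  field_simp
  ring

theorem integral_left_third (hF : IsCantorCDFp p F) :
    ∫ u in (0 : ℝ)..1/3, F u = (∫ u in (0 : ℝ)..1, F u) / (3 * (p + 1)) := by
  have hscale : ∫ u in (0 : ℝ)..1, F (u / 3) = 3 * ∫ u in (0 : ℝ)..1/3, F u := by
    rw [intervalIntegral.integral_comp_div F three_ne_zero]
    norm_num
  have hself : ∫ u in (0 : ℝ)..1, F (u / 3) = (∫ u in (0 : ℝ)..1, F u) / (p + 1) := by
    rw [← intervalIntegral.integral_div]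
    exact intervalIntegral.integral_congr fun u hu ↦
      hF.map_div_three (by simpa [uIcc_of_le zero_le_one] using hu)
  rw [mul_comm 3, ← div_div, ← hself, hscale]
  ring

theorem integral_right_third (hF : IsCantorCDFp p F) :
    ∫ u in (2/3 : ℝ)..1, F u = 1/3 - p * ∫ u in (0 : ℝ)..1/3, F u := by
  have hreflect : ∫ u in (0 : ℝ)..1/3, F (1 - u) = ∫ u in (2/3 : ℝ)..1, F u := by
    rw [intervalIntegral.integral_comp_sub_left F 1]
    norm_num
  rw [← hreflect, intervalIntegral.integral_congr (g := fun u ↦ 1 - p * F u) fun u hu ↦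
      hF.map_one_sub (by simpa [uIcc_of_le (by norm_num : (0 : ℝ) ≤ 1/3)] using hu),
    intervalIntegral.integral_sub intervalIntegrable_const
      ((hF.intervalIntegrable 0 (1/3)).const_mul p),
    intervalIntegral.integral_const_mul]
  simp

theorem integral_zero_one (hF : IsCantorCDFp p F) (hp : 0 < p) :
    ∫ u in (0 : ℝ)..1, F u = (p + 2) / (2 * (2 * p + 1)) := by
  have hsplit : ∫ u in (0 : ℝ)..1, F u = (∫ u in (0 : ℝ)..1/3, F u)
      + (∫ u in (1/3 : ℝ)..2/3, F u) + ∫ u in (2/3 : ℝ)..1, F u := by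
    simp only [intervalIntegral.integral_add_adjacent_intervals, hF.intervalIntegrable]
  rw [hF.integral_middle_third hp.ne' (by positivity), hF.integral_right_third,
    hF.integral_left_third] at hsplit
  field_simp at hsplit ⊢
  linear_combination hsplit

theorem integral_one_sub_from_third (hF : IsCantorCDFp p F) (hp : 0 < p) :
    ∫ u in (1/3 : ℝ)..1, (1 - F u) = p * (5 * p + 4) / (6 * (p + 1) * (2 * p + 1)) := by
  rw [intervalIntegral.integral_sub intervalIntegrable_const (hF.intervalIntegrable _ _),
    ← intervalIntegral.integral_interval_sub_left (hF.intervalIntegrable 0 1)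
      (hF.intervalIntegrable 0 (1/3)),
    hF.integral_left_third, hF.integral_zero_one hp]
  simp only [intervalIntegral.integral_const, smul_eq_mul]
  field_simp
  ring

theorem mrl_third (hF : IsCantorCDFp p F) (hp : 0 < p) :
    mrl F (1/3) = (5 * p + 4) / (6 * (2 * p + 1)) := by
  rw [mrl, hF.integral_one_sub_from_third hp, hF.map_third hp.ne',
    one_sub_div (by positivity), add_sub_cancel_right]
  field_simp

end IsCantorCDFp

/-- For every p > 0, m_p(1/3) = (5p+4)/(6(2p+1)) > 1/3; in particular x = 1/3 is
not a fixed point of m_p. -/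
theorem cantorp_no_fixed_point_at_third (p : ℝ) (hp : 0 < p) (F : ℝ → ℝ)
    (hF : IsCantorCDFp p F) :
    mrl F (1/3) = (5 * p + 4) / (6 * (2 * p + 1)) ∧
      (5 * p + 4) / (6 * (2 * p + 1)) > 1/3 ∧ mrl F (1/3) ≠ 1/3 := by
  have hgt : (5 * p + 4) / (6 * (2 * p + 1)) > 1/3 := by
    rw [gt_iff_lt, lt_div_iff₀ (by positivity)]
    linarith
  exact ⟨hF.mrl_third hp, hgt, hF.mrl_third hp ▸ hgt.ne'⟩
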